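/- For fixed mean μ and threshold t, the expected improvement EI(μ, s, t) = (μ − t)Φ((μ − t)/s) + s·φ((μ − t)/s) is monotonically increasing in s > 0. -/

import Mathlib

/-!
Differentiating in `s`, the chain-rule terms coming from `Φ' = φ` and `φ'(z) = -z φ(z)` cancel
exactly, leaving `∂ EI / ∂ s = φ((μ - t) / s) > 0`.
-/

open ProbabilityTheory MeasureTheory

noncomputable def stdNormalCDF : ℝ → ℝ := fun x => ProbabilityTheory.cdf (gaussianReal 0 1) x
noncomputable def stdNormalPDF : ℝ → ℝ := gaussianPDFReal 0 1

/-- Closed-form Gaussian expected improvement. -/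
noncomputable def EI (μ s t : ℝ) : ℝ :=
  (μ - t) * stdNormalCDF ((μ - t) / s) + s * stdNormalPDF ((μ - t) / s)

open Set

theorem hasDerivAt_integral_Iic {E : Type*} [NormedAddCommGroup E] [NormedSpace ℝ E]
    [CompleteSpace E] {f : ℝ → E} (hf : Integrable f) (hcont : Continuous f) (x : ℝ) :
    HasDerivAt (fun u => ∫ y in Iic u, f y) (f x) x := by
  have hsplit : (fun u => ∫ y in Iic u, f y) =
      fun u => (∫ y in Iic 0, f y) + ∫ y in (0 : ℝ)..u, f y := by
    funext u
    rw [← intervalIntegral.integral_Iic_sub_Iic hf.integrableOn hf.integrableOn,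
      add_sub_cancel]
  rw [hsplit]
  exact (intervalIntegral.integral_hasDerivAt_right hf.intervalIntegrable
    (hcont.stronglyMeasurableAtFilter _ _) hcont.continuousAt).const_add _

theorem stdNormalPDF_pos (x : ℝ) : 0 < stdNormalPDF x :=
  gaussianPDFReal_pos 0 1 x one_ne_zero

theorem continuous_stdNormalPDF : Continuous stdNormalPDF := by
  unfold stdNormalPDF gaussianPDFReal
  fun_prop

theorem stdNormalCDF_eq_integral : stdNormalCDF = fun x => ∫ y in Iic x, stdNormalPDF y := by
  funext x
  rw [stdNormalCDF, cdf_eq_real, measureReal_def,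
    gaussianReal_apply_eq_integral 0 one_ne_zero (Iic x),
    ENNReal.toReal_ofReal
      (setIntegral_nonneg measurableSet_Iic fun y _ => gaussianPDFReal_nonneg 0 1 y)]
  rfl

theorem hasDerivAt_stdNormalCDF (x : ℝ) : HasDerivAt stdNormalCDF (stdNormalPDF x) x := by
  rw [stdNormalCDF_eq_integral]
  exact hasDerivAt_integral_Iic (integrable_gaussianPDFReal 0 1) continuous_stdNormalPDF x

theorem hasDerivAt_stdNormalPDF (x : ℝ) :
    HasDerivAt stdNormalPDF (-x * stdNormalPDF x) x := by
  have hpdf : stdNormalPDF = fun y => (Real.sqrt (2 * Real.pi))⁻¹ * Real.exp (-y ^ 2 / 2) := by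
    funext y
    simp [stdNormalPDF, gaussianPDFReal]
  have hexponent : HasDerivAt (fun y : ℝ => -y ^ 2 / 2) (-x) x :=
    ((hasDerivAt_pow 2 x).neg.div_const 2).congr_deriv (by ring)
  rw [hpdf]
  exact (hexponent.exp.const_mul _).congr_deriv (by ring)

theorem hasDerivAt_EI (μ t : ℝ) {s : ℝ} (hs : s ≠ 0) :
    HasDerivAt (fun s => EI μ s t) (stdNormalPDF ((μ - t) / s)) s := by
  set a := μ - t
  have harg : HasDerivAt (fun s : ℝ => a / s) (-a / s ^ 2) s :=
    ((hasDerivAt_inv hs).const_mul a).congr_deriv (by field_simp)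
  have hcdf := ((hasDerivAt_stdNormalCDF (a / s)).comp s harg).const_mul a
  have hpdf := (hasDerivAt_id s).mul ((hasDerivAt_stdNormalPDF (a / s)).comp s harg)
  refine (hcdf.add hpdf).congr_deriv ?_
  simp only [Function.comp_apply, id]
  field_simp
  ring

theorem strictMonoOn_EI (μ t : ℝ) : StrictMonoOn (fun s => EI μ s t) (Ioi 0) := by
  refine strictMonoOn_of_deriv_pos (convex_Ioi 0) ?_ ?_
  · exact fun s hs => (hasDerivAt_EI μ t (ne_of_gt hs)).continuousAt.continuousWithinAt
  · intro s hs
    rw [interior_Ioi] at hs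
    rw [(hasDerivAt_EI μ t (ne_of_gt hs)).deriv]
    exact stdNormalPDF_pos _

/-- For fixed mean `μ` and threshold `t`, the expected improvement is monotonically
increasing in the standard deviation `s > 0`. -/
theorem EI_mono_stddev (μ t : ℝ) :
    ∀ ⦃s₁ s₂ : ℝ⦄, 0 < s₁ → s₁ ≤ s₂ → EI μ s₁ t ≤ EI μ s₂ t :=
  fun _ _ h₁ h₁₂ => (strictMonoOn_EI μ t).monotoneOn h₁ (h₁.trans_le h₁₂) h₁₂
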